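/- Let L be a Dedekind complete unital f-algebra and X a partially ordered L-module. Then X is Archimedean (i.e., L-Archimedean) if and only if X is both ℝ-Archimedean and P-Archimedean, where P denotes the set of idempotents of L. -/

import Mathlib

/-!
Let `D ⊆ L` be downward directed with infimum `0`, let `x ≥ 0`, and let `y` be a lower bound of
`D x`. It suffices to show `y ≤ ε x` for every real `ε > 0`, since the `ℝ`-Archimedean property
then gives `y ≤ 0`. For `d ∈ D` let `π_d` be the band projection onto the band generated by
`(d - ε)⁺`, an idempotent of `L` by Dedekind completeness. Then `ε π_d ≤ d`, so the `π_d` decrease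
to `0`; and `d ≤ ε + d π_d`, so for a fixed `d₀ ∈ D` directedness gives `y ≤ ε x + π_d (d₀ x)` for
all `d ∈ D`. The `P`-Archimedean property applied to `d₀ x` yields `y ≤ ε x`.
-/

/-- A Dedekind complete unital `f`-algebra over the reals. -/
class DFAlgebra (L : Type*) extends CommRing L, Lattice L, Algebra ℝ L where
  add_le_add_left : ∀ a b : L, a ≤ b → ∀ c : L, c + a ≤ c + b
  mul_nonneg : ∀ a b : L, 0 ≤ a → 0 ≤ b → 0 ≤ a * b
  f_prop : ∀ a b c : L, a ⊓ b = 0 → 0 ≤ c → (c * a) ⊓ b = 0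
  algebraMap_nonneg : ∀ r : ℝ, 0 ≤ r → 0 ≤ algebraMap r
  dedekind : ∀ S : Set L, S.Nonempty → BddAbove S → ∃ a : L, IsLUB S a

/-- A partially ordered `L`-module. -/
class POModule (L : Type*) [DFAlgebra L] (X : Type*) extends
    AddCommGroup X, Module L X, PartialOrder X where
  add_le_add_left : ∀ a b : X, a ≤ b → ∀ c : X, c + a ≤ c + b
  smul_le_smul : ∀ l : L, 0 ≤ l → ∀ a b : X, a ≤ b → l • a ≤ l • b
/-- X is S-Archimedean: for every downward directed D ⊆ S with infimum 0 in L
and every x ≥ 0 in X, the set Dx has infimum 0 in X. -/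
def SArchimedean (L X : Type*) [DFAlgebra L] [POModule L X] (S : Set L) : Prop :=
  ∀ D : Set L, D ⊆ S → DirectedOn (fun a b => b ≤ a) D → IsGLB D 0 →
    ∀ x : X, 0 ≤ x → IsGLB ((fun l => l • x) '' D) 0

section LatticeOrderedGroup

variable {α : Type*} [Lattice α] [AddCommGroup α] [AddLeftMono α]

theorem inf_nonpos_of_isLUB {S : Set α} {a f : α} (ha : IsLUB S a) (h : ∀ s ∈ S, f ⊓ s ≤ 0) :
    f ⊓ a ≤ 0 := by
  have : a ≤ a - f ⊓ a := ha.2 fun s hs => le_sub_iff_add_le.2 <| calc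
    s + f ⊓ a = s ⊓ (f ⊓ a) + s ⊔ (f ⊓ a) := (inf_add_sup _ _).symm
    _ ≤ 0 + a := add_le_add ((le_inf (inf_le_right.trans inf_le_left) inf_le_left).trans (h s hs))
        (sup_le (ha.1 hs) inf_le_right)
    _ = a := zero_add a
  simpa using this

end LatticeOrderedGroup

namespace DFAlgebra

variable {L : Type*} [DFAlgebra L]

instance : IsOrderedAddMonoid L where
  add_le_add_left a b h c := by simpa only [add_comm _ c] using DFAlgebra.add_le_add_left a b h c

instance : ZeroLEOneClass L where
  zero_le_one := by simpa using algebraMap_nonneg (L := L) 1 zero_le_one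

instance : IsOrderedRing L := .of_mul_nonneg mul_nonneg

theorem algebraMap_mono : Monotone (algebraMap ℝ L) := fun r s h => by
  simpa using algebraMap_nonneg (L := L) (s - r) (sub_nonneg.2 h)

theorem mul_eq_zero_of_inf_eq_zero {a b : L} (h : a ⊓ b = 0) : a * b = 0 := by
  have ha : 0 ≤ a := h ▸ inf_le_left
  have hb : 0 ≤ b := h ▸ inf_le_right
  have hba : b ⊓ (b * a) = 0 := by rw [inf_comm]; exact f_prop a b b h hb
  simpa [mul_comm b a] using f_prop b (b * a) a hba ha

theorem nonpos_of_forall_nsmul_le {a b : L} (h : ∀ n : ℕ, n • a ≤ b) : a ≤ 0 := by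
  obtain ⟨s, hs⟩ := dedekind (Set.range fun n : ℕ => n • a) ⟨_, 0, rfl⟩
    ⟨b, by rintro _ ⟨n, rfl⟩; exact h n⟩
  have : s ≤ s - a := hs.2 <| by
    rintro _ ⟨n, rfl⟩
    exact le_sub_iff_add_le.2 (succ_nsmul a n ▸ hs.1 ⟨n + 1, rfl⟩)
  simpa using this

theorem isGLB_algebraMap_Ioi : IsGLB (algebraMap ℝ L '' Set.Ioi 0) 0 := by
  refine ⟨by rintro _ ⟨r, hr, rfl⟩; exact algebraMap_nonneg r (le_of_lt hr),
    fun l hl => nonpos_of_forall_nsmul_le (b := 1) fun n => ?_⟩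
  rcases Nat.eq_zero_or_pos n with rfl | hn
  · simp
  have hn' : (0 : ℝ) < n := Nat.cast_pos.2 hn
  have h := nsmul_le_nsmul_right (hl ⟨(n : ℝ)⁻¹, inv_pos.2 hn', rfl⟩) n
  rwa [← map_nsmul, nsmul_eq_mul n (n : ℝ)⁻¹, mul_inv_cancel₀ hn'.ne', map_one] at h

theorem directedOn_algebraMap_Ioi :
    DirectedOn (fun a b : L => b ≤ a) (algebraMap ℝ L '' Set.Ioi 0) :=
  directedOn_image.2 fun r hr s hs =>
    ⟨min r s, Set.mem_Ioi.2 (lt_min hr hs), algebraMap_mono (min_le_left r s),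
      algebraMap_mono (min_le_right r s)⟩

/-- The component of `1` in the band generated by `v⁺`, namely `⨆ n, n • v⁺ ⊓ 1`. -/
noncomputable def bandProj (v : L) : L :=
  (dedekind (Set.range fun n : ℕ => n • v⁺ ⊓ 1) ⟨_, 0, rfl⟩
    ⟨1, by rintro _ ⟨n, rfl⟩; exact inf_le_right⟩).choose

theorem isLUB_bandProj (v : L) : IsLUB (Set.range fun n : ℕ => n • v⁺ ⊓ 1) (bandProj v) :=
  Exists.choose_spec _

theorem bandProj_nonneg (v : L) : 0 ≤ bandProj v := by
  simpa using (isLUB_bandProj v).1 ⟨0, rfl⟩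

theorem bandProj_le_one (v : L) : bandProj v ≤ 1 :=
  (isLUB_bandProj v).2 <| by rintro _ ⟨n, rfl⟩; exact inf_le_right

theorem bandProj_mono : Monotone (bandProj : L → L) := fun v w h =>
  (isLUB_bandProj v).2 <| by
    rintro _ ⟨n, rfl⟩
    exact (inf_le_inf_right 1 (nsmul_le_nsmul_right (posPart_mono h) n)).trans
      ((isLUB_bandProj w).1 ⟨n, rfl⟩)

theorem inf_bandProj_eq_zero {f v : L} (h : f ⊓ v⁺ = 0) : f ⊓ bandProj v = 0 := by
  refine le_antisymm (inf_nonpos_of_isLUB (isLUB_bandProj v) ?_)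
    (le_inf (h ▸ inf_le_left) (bandProj_nonneg v))
  rintro _ ⟨n, rfl⟩
  calc f ⊓ (n • v⁺ ⊓ 1) ≤ f ⊓ ((n : L) * v⁺) := by
        rw [← nsmul_eq_mul]; exact inf_le_inf_left f inf_le_left
    _ = 0 := by rw [inf_comm]; exact f_prop _ _ _ (by rwa [inf_comm]) n.cast_nonneg

-- With `u := (1 - bandProj v) ⊓ v⁺`, inductively `n • u ≤ n • v⁺ ⊓ 1 ≤ bandProj v ≤ 1 - u`.
theorem one_sub_bandProj_inf_posPart (v : L) : (1 - bandProj v) ⊓ v⁺ = 0 := by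
  set u := (1 - bandProj v) ⊓ v⁺
  have hu : ∀ n : ℕ, n • u ≤ 1 := by
    intro n
    induction n with
    | zero => simp
    | succ n ih =>
      have hn : n • u ≤ bandProj v :=
        (le_inf (nsmul_le_nsmul_right inf_le_right n) ih).trans ((isLUB_bandProj v).1 ⟨n, rfl⟩)
      calc (n + 1) • u = n • u + u := succ_nsmul u n
        _ ≤ bandProj v + (1 - bandProj v) := add_le_add hn inf_le_left
        _ = 1 := add_sub_cancel _ _
  exact le_antisymm (nonpos_of_forall_nsmul_le hu)
    (le_inf (sub_nonneg.2 (bandProj_le_one v)) (posPart_nonneg v))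

theorem bandProj_mul_self (v : L) : bandProj v * bandProj v = bandProj v := by
  have h := mul_eq_zero_of_inf_eq_zero (inf_bandProj_eq_zero (one_sub_bandProj_inf_posPart v))
  linear_combination -h

theorem mul_bandProj (v : L) : v * bandProj v = v⁺ := by
  have h₁ : v⁻ * bandProj v = 0 := mul_eq_zero_of_inf_eq_zero <|
    inf_bandProj_eq_zero (by rw [inf_comm, posPart_inf_negPart_eq_zero])
  have h₂ := mul_eq_zero_of_inf_eq_zero (one_sub_bandProj_inf_posPart v)
  linear_combination (-bandProj v) * posPart_sub_negPart v - h₁ - h₂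

theorem mul_one_sub_bandProj (v : L) : v * (1 - bandProj v) = -v⁻ := by
  linear_combination -mul_bandProj v - posPart_sub_negPart v

theorem mul_bandProj_sub_le {c d : L} (hd : 0 ≤ d) : c * bandProj (d - c) ≤ d := by
  have h : d - c * bandProj (d - c) = d * (1 - bandProj (d - c)) + (d - c)⁺ := by
    rw [← mul_bandProj]; ring
  rw [← sub_nonneg, h]
  exact add_nonneg (mul_nonneg _ _ hd (sub_nonneg.2 (bandProj_le_one _))) (posPart_nonneg _)

theorem le_add_mul_bandProj_sub {c : L} (hc : 0 ≤ c) (d : L) :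
    d ≤ c + d * bandProj (d - c) := by
  set π := bandProj (d - c)
  calc d = c * (1 - π) + (d - c) * (1 - π) + d * π := by ring
    _ = c * (1 - π) - (d - c)⁻ + d * π := by rw [mul_one_sub_bandProj]; ring
    _ ≤ c + d * π := by
      gcongr
      exact (sub_le_self _ (negPart_nonneg _)).trans
        (mul_le_of_le_one_right hc (sub_le_self _ (bandProj_nonneg _)))

theorem isGLB_image_bandProj_sub {D : Set L} (hD : IsGLB D 0) {ε : ℝ} (hε : 0 < ε) :
    IsGLB ((fun d => bandProj (d - algebraMap ℝ L ε)) '' D) 0 := by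
  refine ⟨by rintro _ ⟨d, -, rfl⟩; exact bandProj_nonneg _, fun l hl => ?_⟩
  have hεl : algebraMap ℝ L ε * l ≤ 0 := hD.2 fun d hd =>
    (mul_le_mul_of_nonneg_left (hl ⟨d, hd, rfl⟩) (algebraMap_nonneg ε hε.le)).trans
      (mul_bandProj_sub_le (hD.1 hd))
  have h := mul_le_mul_of_nonneg_left hεl (algebraMap_nonneg ε⁻¹ (inv_nonneg.2 hε.le))
  rwa [mul_zero, ← mul_assoc, ← map_mul, inv_mul_cancel₀ hε.ne', map_one, one_mul] at h

end DFAlgebra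

namespace SArchimedean

open DFAlgebra

variable {L X : Type*} [DFAlgebra L] [POModule L X]

theorem mono {S T : Set L} (h : SArchimedean L X S) (hTS : T ⊆ S) : SArchimedean L X T :=
  fun D hD => h D (hD.trans hTS)

theorem le_algebraMap_smul (hP : SArchimedean L X {π : L | π * π = π}) {D : Set L}
    (hdir : DirectedOn (fun a b => b ≤ a) D) (hD : IsGLB D 0) {d₀ : L} (hd₀ : d₀ ∈ D)
    {x y : X} (hx : 0 ≤ x) (hy : y ∈ lowerBounds ((fun l => l • x) '' D)) {ε : ℝ} (hε : 0 < ε) :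
    y ≤ algebraMap ℝ L ε • x := by
  have : IsOrderedAddMonoid X :=
    { add_le_add_left := fun a b h c => by
        simpa only [add_comm _ c] using POModule.add_le_add_left (L := L) a b h c }
  have : PosSMulMono L X := ⟨fun l hl a b h => POModule.smul_le_smul l hl a b h⟩
  set c := algebraMap ℝ L ε
  set π := fun d => bandProj (d - c)
  have hπ : Monotone π := fun a b h => bandProj_mono (sub_le_sub_right h c)
  have hPD := hP (π '' D) (by rintro _ ⟨d, -, rfl⟩; exact bandProj_mul_self _)
    (hdir.mono_comp fun a b h => hπ h) (isGLB_image_bandProj_sub hD hε)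
    (d₀ • x) (smul_nonneg (hD.1 hd₀) hx)
  refine sub_nonpos.1 (hPD.2 ?_)
  rintro _ ⟨_, ⟨d, hd, rfl⟩, rfl⟩
  obtain ⟨e, he, hed₀, hed⟩ := hdir d₀ hd₀ d hd
  have hle : e ≤ c + d₀ * π d := (le_add_mul_bandProj_sub (algebraMap_nonneg ε hε.le) e).trans
    (add_le_add le_rfl (mul_le_mul hed₀ (hπ hed) (bandProj_nonneg _) (hD.1 hd₀)))
  calc y - c • x ≤ e • x - c • x := sub_le_sub_right (hy ⟨e, he, rfl⟩) _
    _ ≤ (c + d₀ * π d) • x - c • x := sub_le_sub_right (smul_le_smul_of_nonneg_right hle hx) _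
    _ = π d • d₀ • x := by rw [add_smul, mul_comm, mul_smul, add_sub_cancel_left]

end SArchimedean

/-- X is Archimedean iff X is ℝ-Archimedean and P-Archimedean. -/
theorem stmt5 (L X : Type*) [DFAlgebra L] [POModule L X] :
    SArchimedean L X Set.univ ↔
      SArchimedean L X {l : L | ∃ r : ℝ, l = algebraMap ℝ L r} ∧
        SArchimedean L X {π : L | π * π = π} := by
  refine ⟨fun h => ⟨h.mono (Set.subset_univ _), h.mono (Set.subset_univ _)⟩, ?_⟩
  rintro ⟨hR, hP⟩ D - hdir hD x hx
  rcases D.eq_empty_or_nonempty with rfl | ⟨d₀, hd₀⟩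
  · have : Subsingleton L :=
      subsingleton_of_zero_eq_one (le_antisymm zero_le_one (isGLB_empty_iff.1 hD 1))
    have := Module.subsingleton L X
    exact ⟨by simp, fun y _ => (Subsingleton.elim y 0).le⟩
  refine ⟨?_, fun y hy => ?_⟩
  · rintro _ ⟨d, hd, rfl⟩
    simpa using POModule.smul_le_smul d (hD.1 hd) 0 x hx
  refine (hR _ ?_ DFAlgebra.directedOn_algebraMap_Ioi DFAlgebra.isGLB_algebraMap_Ioi x hx).2 ?_
  · rintro _ ⟨r, -, rfl⟩
    exact ⟨r, rfl⟩
  rintro _ ⟨_, ⟨ε, hε, rfl⟩, rfl⟩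
  exact hP.le_algebraMap_smul hdir hD hd₀ hx hy hε
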